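/- Let T be a string of length n. The total number of distinct closed factors of T equals Σ_{j∈J} |lrs(T[1..j])| − Σ_{j∈J} |lrs²(T[1..j])| + n − |J|, where J = { j ∈ [1,n] : lrs(T[1..j]) ≠ ε }. -/

import Mathlib

/-!
Group the closed factors of `T` by the end `j` of their leftmost occurrence. For `S = T[1..j]`
these are exactly the closed suffixes of `S` longer than `lrs S`. If `lrs S = ε`, a closed suffix
of length at least two would have a border repeating in `S`, so only the last letter is one.
Otherwise, sending `m ∈ (|lrs² S|, |lrs S|]` to the suffix of `S` that starts at the previous
occurrence of the length-`m` suffix `v` is a bijection onto them: that suffix has `v` as a border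
occurring exactly twice, and it is longer than `lrs S` because `v` does not occur twice in `lrs S`.
Conversely a closed suffix is recovered from its border occurring twice, which is longer than
`lrs² S` since otherwise it would occur a third time, inside `lrs S`.
-/

variable {α : Type*} [DecidableEq α]

/-- Number of occurrences of `s` as a factor of `w` (starting positions, 0-indexed). -/
def countOcc (s w : List α) : ℕ :=
  ((Finset.range (w.length + 1)).filter (fun i => s <+: w.drop i)).card

/-- `b` is a border of `w`. -/
def IsBorder (b w : List α) : Prop := b ≠ w ∧ b <+: w ∧ b <:+ w

/-- The longest border of `w`. -/
def bord (w : List α) : List α :=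
  w.take (((Finset.range w.length).filter (fun k => w.take k <:+ w)).sup id)

/-- A string is closed if its length is one, or it has a nonempty border occurring
exactly twice in it. -/
def IsClosedStr (w : List α) : Prop :=
  w.length = 1 ∨ ∃ b : List α, b ≠ [] ∧ IsBorder b w ∧ countOcc b w = 2

/-- The longest repeating suffix of `w` (the empty string if none). -/
def lrs (w : List α) : List α :=
  w.drop (w.length -
    ((Finset.range (w.length + 1)).filter
      (fun k => 2 ≤ countOcc (w.drop (w.length - k)) w)).sup id)

/-- `u` is a factor (contiguous substring) of `w`. -/
def IsFactor (u w : List α) : Prop := ∃ s t : List α, w = s ++ u ++ t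

/-- The set of all factors of `w`. -/
def factors (w : List α) : Finset (List α) :=
  (Finset.range (w.length + 1) ×ˢ Finset.range (w.length + 1)).image
    (fun p => (w.drop p.1).take p.2)

/-- The set of distinct closed factors of `w`. -/
noncomputable def closedFactors (w : List α) : Finset (List α) :=
  @Finset.filter _ IsClosedStr (Classical.decPred _) (factors w)

open Finset

theorem List.length_rtake_of_le {β : Type*} {l : List β} {n : ℕ} (h : n ≤ l.length) :
    (l.rtake n).length = n := by
  rw [List.rtake, List.length_drop]
  omega

theorem List.rtake_suffix {β : Type*} (l : List β) (n : ℕ) : l.rtake n <:+ l :=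
  List.drop_suffix _ _

theorem List.IsSuffix.rtake_length_eq {β : Type*} {l₁ l₂ : List β} (h : l₁ <:+ l₂) :
    l₂.rtake l₁.length = l₁ :=
  (List.suffix_iff_eq_drop.mp h).symm

theorem exists_suffix_take_of_infix {β : Type*} {u l : List β} (h : u <:+: l) :
    ∃ k ≤ l.length, u <:+ l.take k := by
  obtain ⟨t, hut, htl⟩ := List.infix_iff_suffix_prefix.mp h
  exact ⟨t.length, htl.length_le, List.prefix_iff_eq_take.mp htl ▸ hut⟩

theorem IsBorder.length_lt {β : Type*} {b w : List β} (h : IsBorder b w) : b.length < w.length :=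
  lt_of_le_of_ne h.2.1.length_le fun e => h.1 (h.2.1.eq_of_length e)

theorem isBorder_of_length_lt {β : Type*} {b w : List β} (hp : b <+: w) (hs : b <:+ w)
    (hlt : b.length < w.length) : IsBorder b w :=
  ⟨fun e => (congrArg List.length e ▸ hlt).false, hp, hs⟩

def occSet (s w : List α) : Finset ℕ :=
  (range (w.length + 1)).filter (fun i => s <+: w.drop i)

section Occurrences

variable {s v w W : List α} {i : ℕ}

theorem countOcc_eq_card_occSet (s w : List α) : countOcc s w = (occSet s w).card := rfl

theorem mem_occSet : i ∈ occSet s w ↔ i ≤ w.length ∧ s <+: w.drop i := by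
  simp [occSet]

theorem add_length_le_of_mem_occSet (h : i ∈ occSet s w) : i + s.length ≤ w.length := by
  have := (mem_occSet.mp h).2.length_le
  rw [List.length_drop] at this
  have := (mem_occSet.mp h).1
  omega

theorem zero_mem_occSet_of_prefix (h : s <+: w) : 0 ∈ occSet s w :=
  mem_occSet.mpr ⟨Nat.zero_le _, by rwa [List.drop_zero]⟩

theorem sub_mem_occSet_of_suffix (h : s <:+ w) : w.length - s.length ∈ occSet s w :=
  mem_occSet.mpr ⟨Nat.sub_le _ _, by rw [← List.suffix_iff_eq_drop.mp h]⟩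

theorem occSet_subset_of_prefix (h : w <+: W) : occSet s w ⊆ occSet s W := fun i hi => by
  rw [mem_occSet] at hi ⊢
  exact ⟨hi.1.trans h.length_le, hi.2.trans (h.drop i)⟩

theorem add_mem_occSet_of_suffix (hw : w <:+ W) (h : i ∈ occSet s w) :
    W.length - w.length + i ∈ occSet s W := by
  rw [mem_occSet] at h ⊢
  have := hw.length_le
  refine ⟨by omega, ?_⟩
  rw [List.suffix_iff_eq_drop.mp hw, List.drop_drop] at h
  exact h.2

theorem add_mem_occSet_of_suffix_left (hv : v <:+ s) (h : i ∈ occSet s w) :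
    i + (s.length - v.length) ∈ occSet v w := by
  have hi := add_length_le_of_mem_occSet h
  have hsv := hv.length_le
  rw [mem_occSet] at h ⊢
  refine ⟨by omega, ?_⟩
  rw [← List.drop_drop]
  simpa [← List.suffix_iff_eq_drop.mp hv] using h.2.drop (s.length - v.length)

theorem suffix_take_of_mem_occSet (h : i ∈ occSet s w) : s <:+ w.take (i + s.length) := by
  rw [List.take_add, ← List.prefix_iff_eq_take.mp (mem_occSet.mp h).2]
  exact List.suffix_append _ _

theorem countOcc_le_countOcc_of_suffix (hw : w <:+ W) : countOcc s w ≤ countOcc s W :=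
  card_le_card_of_injOn (W.length - w.length + ·) (fun _ hi => add_mem_occSet_of_suffix hw hi)
    (fun _ _ _ _ h => by simpa using h)

theorem countOcc_le_countOcc_of_suffix_left (hv : v <:+ s) (w : List α) :
    countOcc s w ≤ countOcc v w :=
  card_le_card_of_injOn (· + (s.length - v.length))
    (fun _ hi => add_mem_occSet_of_suffix_left hv hi) (fun _ _ _ _ h => by simpa using h)

/-- The occurrences in a proper suffix are shifted away from position `0`, where `s` also
occurs. -/
theorem countOcc_lt_countOcc_of_suffix (hs : s <+: W) (hw : w <:+ W)
    (hlt : w.length < W.length) : countOcc s w < countOcc s W := by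
  have h0 := zero_mem_occSet_of_prefix hs
  have hle : (occSet s w).card ≤ ((occSet s W).erase 0).card :=
    card_le_card_of_injOn (fun i => W.length - w.length + i)
      (fun j hj => mem_erase.mpr ⟨by dsimp only; omega, add_mem_occSet_of_suffix hw hj⟩)
      (fun _ _ _ _ h => by simpa using h)
  rw [card_erase_of_mem h0] at hle
  have := card_pos.mpr ⟨0, h0⟩
  rw [countOcc_eq_card_occSet, countOcc_eq_card_occSet]
  omega

theorem IsBorder.two_le_countOcc {b : List α} (h : IsBorder b w) : 2 ≤ countOcc b w := by
  have := h.length_lt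
  exact one_lt_card.mpr ⟨0, zero_mem_occSet_of_prefix h.2.1, _, sub_mem_occSet_of_suffix h.2.2,
    by omega⟩

theorem two_lt_countOcc_of_isBorder_of_suffix (hb : IsBorder s w) (hs : s <+: W)
    (hw : w <:+ W) (hlt : w.length < W.length) : 2 < countOcc s W :=
  hb.two_le_countOcc.trans_lt (countOcc_lt_countOcc_of_suffix hs hw hlt)

end Occurrences

theorem mem_factors {u w : List α} : u ∈ factors w ↔ u <:+: w := by
  rw [factors, mem_image]
  constructor
  · rintro ⟨⟨i, k⟩, -, rfl⟩
    exact (List.take_prefix _ _).isInfix.trans (List.drop_suffix _ _).isInfix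
  · rw [List.infix_iff_prefix_suffix]
    rintro ⟨t, hut, htw⟩
    have := htw.length_le
    have := hut.length_le
    refine ⟨(w.length - t.length, u.length), by simp only [mem_product, mem_range]; omega, ?_⟩
    rw [← List.suffix_iff_eq_drop.mp htw, ← List.prefix_iff_eq_take.mp hut]

theorem mem_closedFactors {u w : List α} :
    u ∈ closedFactors w ↔ u <:+: w ∧ IsClosedStr u := by
  simp only [closedFactors, mem_filter, mem_factors]

/-- The last occurrence of `v` in `S` before the one at `S.length - v.length` (`0` if there is
none); for a suffix `v` of `S` occurring twice, `S.drop (prevOcc S v)` is the shortest suffix of `S`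
with `v` as a border. -/
def prevOcc (S v : List α) : ℕ :=
  ((occSet v S).filter (· < S.length - v.length)).sup id

section PrevOcc

variable {S u v : List α}

theorem prevOcc_mem_occSet (hv : v <:+ S) (h2 : 2 ≤ countOcc v S) :
    prevOcc S v ∈ occSet v S ∧ prevOcc S v < S.length - v.length := by
  have hlast := sub_mem_occSet_of_suffix hv
  obtain ⟨p, hp⟩ : ((occSet v S).erase (S.length - v.length)).Nonempty := by
    rw [← card_pos, card_erase_of_mem hlast, ← countOcc_eq_card_occSet]
    omega
  have := add_length_le_of_mem_occSet (mem_of_mem_erase hp)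
  have := ne_of_mem_erase hp
  obtain ⟨q, hq, hsup⟩ := exists_mem_eq_sup ((occSet v S).filter (· < S.length - v.length))
    ⟨p, mem_filter.mpr ⟨mem_of_mem_erase hp, by omega⟩⟩ id
  rw [prevOcc, hsup]
  exact mem_filter.mp hq

theorem le_prevOcc {q : ℕ} (hq : q ∈ occSet v S) (hlt : q < S.length - v.length) :
    q ≤ prevOcc S v :=
  le_sup (f := id) (mem_filter.mpr ⟨hq, hlt⟩)

theorem isBorder_drop_prevOcc (hv : v <:+ S) (h2 : 2 ≤ countOcc v S) :
    IsBorder v (S.drop (prevOcc S v)) := by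
  obtain ⟨hp, hlt⟩ := prevOcc_mem_occSet hv h2
  have hlen : v.length < (S.drop (prevOcc S v)).length := by
    rw [List.length_drop]
    omega
  exact isBorder_of_length_lt (mem_occSet.mp hp).2
    (List.suffix_of_suffix_length_le hv (List.drop_suffix _ _) hlen.le) hlen

theorem countOcc_drop_prevOcc (hv : v <:+ S) (h2 : 2 ≤ countOcc v S) :
    countOcc v (S.drop (prevOcc S v)) = 2 := by
  set p := prevOcc S v
  have hp := (prevOcc_mem_occSet hv h2).2
  refine le_antisymm ?_ (isBorder_drop_prevOcc hv h2).two_le_countOcc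
  have hsub : occSet v (S.drop p) ⊆ {0, S.length - p - v.length} := by
    intro q hq
    have hlift := add_mem_occSet_of_suffix (List.drop_suffix p S) hq
    have hqle := add_length_le_of_mem_occSet hq
    rw [List.length_drop] at hlift hqle
    have := le_prevOcc hlift
    simp only [mem_insert, mem_singleton]
    omega
  exact (card_le_card hsub).trans card_le_two

theorem drop_prevOcc_eq (hu : u <:+ S) (hb : IsBorder v u) (h2 : countOcc v u = 2) :
    S.drop (prevOcc S v) = u := by
  have hvS : v <:+ S := hb.2.2.trans hu
  have h2S : 2 ≤ countOcc v S := h2 ▸ countOcc_le_countOcc_of_suffix hu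
  have hvu := hb.length_lt
  have hstart : S.length - u.length ∈ occSet v S := by
    simpa using add_mem_occSet_of_suffix hu (zero_mem_occSet_of_prefix hb.2.1)
  have hle := le_prevOcc hstart (by have := hu.length_le; omega)
  suffices prevOcc S v = S.length - u.length by rw [this, ← List.suffix_iff_eq_drop.mp hu]
  by_contra hne
  have hshort : (S.drop (prevOcc S v)).length < u.length := by
    rw [List.length_drop]
    omega
  have := two_lt_countOcc_of_isBorder_of_suffix (isBorder_drop_prevOcc hvS h2S) hb.2.1
    (List.suffix_of_suffix_length_le (List.drop_suffix _ _) hu hshort.le) hshort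
  omega

end PrevOcc

section Lrs

variable {S u v w : List α}

theorem lrs_suffix (w : List α) : lrs w <:+ w := List.drop_suffix _ _

theorem length_le_length_lrs (hv : v <:+ w) (h2 : 2 ≤ countOcc v w) :
    v.length ≤ (lrs w).length := by
  set K := ((range (w.length + 1)).filter
    (fun k => 2 ≤ countOcc (w.drop (w.length - k)) w)).sup id
  have hK : K ≤ w.length := Finset.sup_le fun k hk => by
    simpa [Nat.lt_succ_iff] using (mem_filter.mp hk).1
  have hvK : v.length ≤ K := le_sup (f := id) <| mem_filter.mpr
    ⟨mem_range.mpr (Nat.lt_succ_of_le hv.length_le), by rwa [← List.suffix_iff_eq_drop.mp hv]⟩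
  rw [lrs, List.length_drop]
  omega

theorem two_le_countOcc_lrs (hw : w ≠ []) : 2 ≤ countOcc (lrs w) w := by
  have h0 : 0 ∈ (range (w.length + 1)).filter
      (fun k => 2 ≤ countOcc (w.drop (w.length - k)) w) := by
    refine mem_filter.mpr ⟨by simp, ?_⟩
    rw [Nat.sub_zero, List.drop_length]
    exact IsBorder.two_le_countOcc ⟨hw.symm, List.nil_prefix, List.nil_suffix⟩
  obtain ⟨k, hk, hsup⟩ := exists_mem_eq_sup _ ⟨0, h0⟩ id
  rw [lrs, hsup]
  exact (mem_filter.mp hk).2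

theorem two_le_countOcc_iff_length_le_length_lrs (hS : S ≠ []) (hu : u <:+ S) :
    2 ≤ countOcc u S ↔ u.length ≤ (lrs S).length :=
  ⟨length_le_length_lrs hu, fun h => (two_le_countOcc_lrs hS).trans
    (countOcc_le_countOcc_of_suffix_left
      (List.suffix_of_suffix_length_le hu (lrs_suffix S) h) S)⟩

theorem infix_dropLast_iff_two_le_countOcc (hu : u <:+ S) (hne : u ≠ []) :
    u <:+: S.dropLast ↔ 2 ≤ countOcc u S := by
  have hu0 := List.length_pos_iff.mpr hne
  constructor
  · rw [List.infix_iff_suffix_prefix]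
    rintro ⟨t, hut, htS⟩
    have := hut.length_le
    have := htS.length_le
    rw [List.length_dropLast] at this
    refine one_lt_card.mpr ⟨_, occSet_subset_of_prefix (htS.trans (List.dropLast_prefix S))
      (sub_mem_occSet_of_suffix hut), _, sub_mem_occSet_of_suffix hu, by omega⟩
  · intro h2
    obtain ⟨hp, hlt⟩ := prevOcc_mem_occSet hu h2
    refine (suffix_take_of_mem_occSet hp).isInfix.trans (List.IsPrefix.isInfix ?_)
    rw [List.dropLast_eq_take]
    exact List.take_prefix_take_left (by omega)

theorem infix_dropLast_iff_length_le_length_lrs (hu : u <:+ S) (hne : u ≠ []) :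
    u <:+: S.dropLast ↔ u.length ≤ (lrs S).length :=
  (infix_dropLast_iff_two_le_countOcc hu hne).trans
    (two_le_countOcc_iff_length_le_length_lrs (hu.ne_nil hne) hu)

end Lrs

theorem IsClosedStr.ne_nil {u : List α} (h : IsClosedStr u) : u ≠ [] := by
  rintro rfl
  obtain h | ⟨b, hb, hbord, -⟩ := h
  · simp at h
  · exact hb (List.prefix_nil.mp hbord.2.1)

/-- The closed suffixes of `S` that occur only once in `S`, i.e. the closed factors of `S` whose
leftmost occurrence ends at the end of `S`. -/
noncomputable def newClosedSuffixes (S : List α) : Finset (List α) :=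
  (closedFactors S).filter (fun u => u <:+ S ∧ (lrs S).length < u.length)

section NewClosedSuffixes

variable {S u : List α}

theorem mem_newClosedSuffixes :
    u ∈ newClosedSuffixes S ↔ IsClosedStr u ∧ u <:+ S ∧ (lrs S).length < u.length := by
  rw [newClosedSuffixes, mem_filter, mem_closedFactors]
  exact ⟨fun h => ⟨h.1.2, h.2⟩, fun h => ⟨⟨h.2.1.isInfix, h.1⟩, h.2⟩⟩

theorem length_le_length_lrs_of_isBorder {b : List α} (hu : u <:+ S) (hb : IsBorder b u) :
    b.length ≤ (lrs S).length :=
  length_le_length_lrs (hb.2.2.trans hu)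
    (hb.two_le_countOcc.trans (countOcc_le_countOcc_of_suffix hu))

theorem card_newClosedSuffixes_of_lrs_eq_nil (hS : S ≠ []) (h : lrs S = []) :
    (newClosedSuffixes S).card = 1 := by
  have hS1 : 1 ≤ S.length := List.length_pos_iff.mpr hS
  refine card_eq_one.mpr ⟨S.rtake 1, ext fun u => ?_⟩
  rw [mem_newClosedSuffixes, mem_singleton, h, List.length_nil]
  constructor
  · rintro ⟨hcl | ⟨b, hb, hbord, -⟩, hu, -⟩
    · rw [← hcl, hu.rtake_length_eq]
    · have := length_le_length_lrs_of_isBorder hu hbord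
      rw [h, List.length_nil, Nat.le_zero, List.length_eq_zero_iff] at this
      exact absurd this hb
  · rintro rfl
    rw [List.length_rtake_of_le hS1]
    exact ⟨Or.inl (List.length_rtake_of_le hS1), List.rtake_suffix _ _, Nat.one_pos⟩

theorem two_le_countOcc_rtake {m : ℕ} (hm : m ∈ Icc 1 (lrs S).length) :
    2 ≤ countOcc (S.rtake m) S := by
  rw [mem_Icc] at hm
  have hmS := hm.2.trans (lrs_suffix S).length_le
  rw [two_le_countOcc_iff_length_le_length_lrs (List.ne_nil_of_length_pos (by omega))
    (List.rtake_suffix _ _), List.length_rtake_of_le hmS]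
  exact hm.2

theorem drop_prevOcc_rtake_mem_newClosedSuffixes {m : ℕ}
    (hm : m ∈ Icc ((lrs (lrs S)).length + 1) (lrs S).length) :
    S.drop (prevOcc S (S.rtake m)) ∈ newClosedSuffixes S := by
  have h2 := two_le_countOcc_rtake (Icc_subset_Icc_left (by omega) hm)
  rw [mem_Icc] at hm
  set v := S.rtake m
  set W := S.drop (prevOcc S v)
  have hv : v <:+ S := S.rtake_suffix m
  have hvl : v.length = m := List.length_rtake_of_le (hm.2.trans (lrs_suffix S).length_le)
  have hvne : v ≠ [] := List.ne_nil_of_length_pos (by omega)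
  refine mem_newClosedSuffixes.mpr ⟨Or.inr ⟨v, hvne, isBorder_drop_prevOcc hv h2,
    countOcc_drop_prevOcc hv h2⟩, List.drop_suffix _ _, ?_⟩
  by_contra! hshort
  -- otherwise both occurrences of `v` in `W` lie inside `lrs S`
  have hW : W <:+ lrs S :=
    List.suffix_of_suffix_length_le (List.drop_suffix _ S) (lrs_suffix S) hshort
  have := length_le_length_lrs ((isBorder_drop_prevOcc hv h2).2.2.trans hW)
    ((countOcc_drop_prevOcc hv h2).symm.le.trans (countOcc_le_countOcc_of_suffix hW))
  omega

theorem drop_prevOcc_rtake_ne_of_lt {m m' : ℕ} (hm : m ∈ Icc 1 (lrs S).length)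
    (hm' : m' ∈ Icc 1 (lrs S).length) (hlt : m < m') :
    S.drop (prevOcc S (S.rtake m)) ≠ S.drop (prevOcc S (S.rtake m')) := by
  have h2 := two_le_countOcc_rtake hm
  have h2' := two_le_countOcc_rtake hm'
  rw [mem_Icc] at hm hm'
  set v := S.rtake m
  set v' := S.rtake m'
  set W := S.drop (prevOcc S v')
  have hv : v <:+ S := S.rtake_suffix m
  have hv' : v' <:+ S := S.rtake_suffix m'
  have hvl : v.length = m := List.length_rtake_of_le (hm.2.trans (lrs_suffix S).length_le)
  have hvl' : v'.length = m' := List.length_rtake_of_le (hm'.2.trans (lrs_suffix S).length_le)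
  have hbord' : IsBorder v' W := isBorder_drop_prevOcc hv' h2'
  have hW := hbord'.length_lt
  intro heq
  have hcount : countOcc v W = 2 := heq ▸ countOcc_drop_prevOcc hv h2
  -- `v` is also a border of `W.drop (m' - m)`, as a suffix of the prefix `v'` of `W`
  have hmid := add_mem_occSet_of_suffix_left
    (List.suffix_of_suffix_length_le hv hv' (by omega)) (zero_mem_occSet_of_prefix hbord'.2.1)
  rw [zero_add, hvl, hvl'] at hmid
  have hW' : W.drop (m' - m) <:+ W := List.drop_suffix _ _
  have hlen : v.length < (W.drop (m' - m)).length := by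
    rw [List.length_drop]
    omega
  have := two_lt_countOcc_of_isBorder_of_suffix
    (isBorder_of_length_lt (mem_occSet.mp hmid).2
      (List.suffix_of_suffix_length_le hv (hW'.trans (List.drop_suffix _ S)) hlen.le) hlen)
    (heq ▸ (isBorder_drop_prevOcc hv h2).2.1) hW'
    (by rw [List.length_drop]; omega)
  omega

theorem exists_drop_prevOcc_rtake_eq (hS : lrs S ≠ []) (hu : u ∈ newClosedSuffixes S) :
    ∃ m ∈ Icc ((lrs (lrs S)).length + 1) (lrs S).length,
      S.drop (prevOcc S (S.rtake m)) = u := by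
  obtain ⟨hcl, huS, hlong⟩ := mem_newClosedSuffixes.mp hu
  have := List.length_pos_iff.mpr hS
  obtain hu1 | ⟨b, -, hb, h2⟩ := hcl
  · omega
  have hbS : b <:+ S := hb.2.2.trans huS
  refine ⟨b.length, mem_Icc.mpr ⟨?_, length_le_length_lrs_of_isBorder huS hb⟩, ?_⟩
  · -- otherwise `b` occurs twice in `lrs S`, a proper suffix of `u`, and once more at its start
    by_contra! hshort
    have hb2 : 2 ≤ countOcc b (lrs S) := (two_le_countOcc_lrs hS).trans
      (countOcc_le_countOcc_of_suffix_left
        (List.suffix_of_suffix_length_le hbS ((lrs_suffix _).trans (lrs_suffix S))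
          (Nat.le_of_lt_succ hshort)) _)
    have := hb2.trans_lt (countOcc_lt_countOcc_of_suffix hb.2.1
      (List.suffix_of_suffix_length_le (lrs_suffix S) huS hlong.le) hlong)
    omega
  · rw [hbS.rtake_length_eq]
    exact drop_prevOcc_eq huS hb h2

theorem card_newClosedSuffixes_of_lrs_ne_nil (hS : lrs S ≠ []) :
    (newClosedSuffixes S).card = (lrs S).length - (lrs (lrs S)).length := by
  have hIcc : (Icc ((lrs (lrs S)).length + 1) (lrs S).length).card
      = (lrs S).length - (lrs (lrs S)).length := by
    rw [Nat.card_Icc]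
    omega
  rw [← hIcc]
  refine (card_bij (fun m _ => S.drop (prevOcc S (S.rtake m)))
    (fun _ hm => drop_prevOcc_rtake_mem_newClosedSuffixes hm) ?_
    (fun _ hu => let ⟨m, hm, h⟩ := exists_drop_prevOcc_rtake_eq hS hu; ⟨m, hm, h⟩)).symm
  intro m hm m' hm' heq
  have hsub : Icc ((lrs (lrs S)).length + 1) (lrs S).length ⊆ Icc 1 (lrs S).length :=
    Icc_subset_Icc_left (Nat.le_add_left _ _)
  by_contra hne
  rcases Nat.lt_or_gt_of_ne hne with hlt | hlt
  · exact drop_prevOcc_rtake_ne_of_lt (hsub hm) (hsub hm') hlt heq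
  · exact drop_prevOcc_rtake_ne_of_lt (hsub hm') (hsub hm) hlt heq.symm

end NewClosedSuffixes

section Partition

variable (T : List α)

theorem disjoint_newClosedSuffixes_take {j j' : ℕ} (hlt : j < j') (hj' : j' ≤ T.length) :
    Disjoint (newClosedSuffixes (T.take j)) (newClosedSuffixes (T.take j')) := by
  refine disjoint_left.mpr fun u hu hu' => ?_
  obtain ⟨hcl, huj, -⟩ := mem_newClosedSuffixes.mp hu
  obtain ⟨-, huj', hlong⟩ := mem_newClosedSuffixes.mp hu'
  have hpre : T.take j <+: (T.take j').dropLast := by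
    rw [List.dropLast_eq_take, List.length_take, List.take_take]
    exact List.take_prefix_take_left (by omega)
  have := (infix_dropLast_iff_length_le_length_lrs huj' hcl.ne_nil).mp
    (huj.isInfix.trans hpre.isInfix)
  omega

theorem exists_mem_newClosedSuffixes_take {u : List α} (hu : u ∈ closedFactors T) :
    ∃ j ∈ Icc 1 T.length, u ∈ newClosedSuffixes (T.take j) := by
  obtain ⟨hinf, hcl⟩ := mem_closedFactors.mp hu
  have hex : ∃ j, u <:+ T.take j :=
    let ⟨k, _, hk⟩ := exists_suffix_take_of_infix hinf; ⟨k, hk⟩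
  have hj := Nat.find_spec hex
  have hpos : 0 < Nat.find hex := Nat.pos_of_ne_zero fun h0 =>
    hcl.ne_nil (List.suffix_nil.mp (by simpa [h0] using hj))
  refine ⟨Nat.find hex, mem_Icc.mpr ⟨hpos, ?_⟩, mem_newClosedSuffixes.mpr ⟨hcl, hj, ?_⟩⟩
  · obtain ⟨k, hk, huk⟩ := exists_suffix_take_of_infix hinf
    exact (Nat.find_min' hex huk).trans hk
  · by_contra! hshort
    obtain ⟨k, hk, huk⟩ := exists_suffix_take_of_infix
      ((infix_dropLast_iff_length_le_length_lrs hj hcl.ne_nil).mpr hshort)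
    rw [List.dropLast_eq_take, List.take_take, List.take_take, List.length_take] at huk
    rw [List.length_dropLast, List.length_take] at hk
    exact Nat.find_min hex (by omega) huk

theorem closedFactors_eq_biUnion :
    closedFactors T = (Icc 1 T.length).biUnion (fun j => newClosedSuffixes (T.take j)) := by
  ext u
  simp only [mem_biUnion]
  constructor
  · exact exists_mem_newClosedSuffixes_take T
  · rintro ⟨j, -, hu⟩
    obtain ⟨hcl, huj, -⟩ := mem_newClosedSuffixes.mp hu
    exact mem_closedFactors.mpr ⟨huj.isInfix.trans (List.take_prefix j T).isInfix, hcl⟩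

theorem card_closedFactors_eq_sum :
    (closedFactors T).card = ∑ j ∈ Icc 1 T.length, (newClosedSuffixes (T.take j)).card := by
  rw [closedFactors_eq_biUnion, card_biUnion]
  intro j hj j' hj' hne
  rw [coe_Icc, Set.mem_Icc] at hj hj'
  rcases Nat.lt_or_gt_of_ne hne with hlt | hlt
  · exact disjoint_newClosedSuffixes_take T hlt hj'.2
  · exact (disjoint_newClosedSuffixes_take T hlt hj.2).symm

end Partition

theorem card_newClosedSuffixes_take_eq (T : List α) {j : ℕ} (hj : j ∈ Icc 1 T.length) :
    ((newClosedSuffixes (T.take j)).card : ℤ) =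
      if lrs (T.take j) ≠ [] then
        ((lrs (T.take j)).length : ℤ) - (lrs (lrs (T.take j))).length
      else 1 := by
  have hne : T.take j ≠ [] := by
    rw [mem_Icc] at hj
    simp only [ne_eq, List.take_eq_nil_iff, not_or]
    exact ⟨by omega, List.ne_nil_of_length_pos (by omega)⟩
  split_ifs with h
  · rw [card_newClosedSuffixes_of_lrs_ne_nil h, Nat.cast_sub (lrs_suffix _).length_le]
  · rw [card_newClosedSuffixes_of_lrs_eq_nil hne (not_not.mp h), Nat.cast_one]

theorem stmt5 (T : List α) :
    ((closedFactors T).card : ℤ) =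
      (∑ j ∈ (Finset.Icc 1 T.length).filter (fun j => lrs (T.take j) ≠ []),
        ((lrs (T.take j)).length : ℤ)) -
      (∑ j ∈ (Finset.Icc 1 T.length).filter (fun j => lrs (T.take j) ≠ []),
        ((lrs (lrs (T.take j))).length : ℤ)) +
      T.length -
      ((Finset.Icc 1 T.length).filter (fun j => lrs (T.take j) ≠ [])).card := by
  rw [card_closedFactors_eq_sum, Nat.cast_sum,
    sum_congr rfl fun j hj => card_newClosedSuffixes_take_eq T hj, sum_ite, sum_sub_distrib,
    sum_const, nsmul_one]
  have := card_filter_add_card_filter_not (s := Icc 1 T.length) (fun j => lrs (T.take j) ≠ [])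
  rw [Nat.card_Icc] at this
  omega
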